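/- arXiv:2307.07690 — 4 statements merged into one kernel-verified Lean document; each statement's English description precedes it below -/
import Mathlib

section
/- Let m ≠ n be natural numbers with m, n ≥ 1 and h : ℝ → ℝ continuously differentiable. Define, for initial data (x₀, y₀) with x₀, y₀ > 0, the functions x(t) = x₀·(1 − h'(x₀^m y₀^n)(m−n)x₀^(m−1)y₀^(n−1)·t)^(n/(n−m)) and y(t) = y₀·(1 − h'(x₀^m y₀^n)(m−n)x₀^(m−1)y₀^(n−1)·t)^(m/(m−n)). Then on the maximal interval where 1 − h'(x₀^m y₀^n)(m−n)x₀^(m−1)y₀^(n−1)·t > 0, these functions satisfy x'(t) = h'(x(t)^m y(t)^n)·n·x(t)^m·y(t)^(n−1) and y'(t) = −h'(x(t)^m y(t)^n)·m·x(t)^(m−1)·y(t)^n. -/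
theorem stmt_1 (m n : ℕ) (hm : 1 ≤ m) (hn : 1 ≤ n) (hmn : m ≠ n)
    (h : ℝ → ℝ) (hh : ContDiff ℝ 1 h)
    (x₀ y₀ : ℝ) (hx₀ : 0 < x₀) (hy₀ : 0 < y₀)
    (κ : ℝ)
    (hκ : κ = deriv h (x₀ ^ m * y₀ ^ n) * ((m : ℝ) - (n : ℝ)) * x₀ ^ (m - 1) * y₀ ^ (n - 1))
    (x y : ℝ → ℝ)
    (hx : x = fun t : ℝ => x₀ * (1 - κ * t) ^ ((n : ℝ) / ((n : ℝ) - (m : ℝ))))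
    (hy : y = fun t : ℝ => y₀ * (1 - κ * t) ^ ((m : ℝ) / ((m : ℝ) - (n : ℝ)))) :
    ∀ t : ℝ, 0 < 1 - κ * t →
      HasDerivAt x (deriv h ((x t) ^ m * (y t) ^ n) * n * (x t) ^ m * (y t) ^ (n - 1)) t ∧
      HasDerivAt y (-(deriv h ((x t) ^ m * (y t) ^ n) * m * (x t) ^ (m - 1) * (y t) ^ n)) t := by
  obtain ⟨a, rfl⟩ : ∃ a, m = a + 1 := ⟨m - 1, (Nat.succ_pred_eq_of_pos hm).symm⟩
  obtain ⟨b, rfl⟩ : ∃ b, n = b + 1 := ⟨n - 1, (Nat.succ_pred_eq_of_pos hn).symm⟩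
  simp only [Nat.add_sub_cancel] at hκ ⊢
  intro t ht
  set u : ℝ := 1 - κ * t with hu
  have hu0 : 0 < u := ht
  have hab : ((a : ℝ)) ≠ (b : ℝ) := by exact_mod_cast (by omega : a ≠ b)
  set M : ℝ := ((a + 1 : ℕ) : ℝ) with hM
  set N : ℝ := ((b + 1 : ℕ) : ℝ) with hN
  have hMa : M = (a : ℝ) + 1 := by push_cast [hM]; ring
  have hNb : N = (b : ℝ) + 1 := by push_cast [hN]; ring
  have hNM : N - M ≠ 0 := by rw [hMa, hNb]; intro hc; apply hab; linarith
  have hMN : M - N ≠ 0 := by rw [hMa, hNb]; intro hc; apply hab; linarith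
  set p : ℝ := N / (N - M) with hp
  set q : ℝ := M / (M - N) with hq
  set D : ℝ := deriv h (x₀ ^ (a + 1) * y₀ ^ (b + 1)) with hD
  -- derivative of the base
  have hdu : HasDerivAt (fun s : ℝ => 1 - κ * s) (-κ) t := by
    simpa using (((hasDerivAt_id t).const_mul κ).const_sub (1 : ℝ))
  have hxder : HasDerivAt x (x₀ * (-κ * p * u ^ (p - 1))) t := by
    rw [hx]
    exact ((hdu.rpow_const (Or.inl (ne_of_gt hu0))).const_mul x₀)
  have hyder : HasDerivAt y (y₀ * (-κ * q * u ^ (q - 1))) t := by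
    rw [hy]
    exact ((hdu.rpow_const (Or.inl (ne_of_gt hu0))).const_mul y₀)
  -- powers of x t and y t
  have pow_aux : ∀ (c : ℝ) (e : ℝ) (k : ℕ), (c * u ^ e) ^ k = c ^ k * u ^ (e * k) := by
    intro c e k
    rw [mul_pow, ← Real.rpow_natCast (u ^ e) k, ← Real.rpow_mul hu0.le]
  have hxt : ∀ k : ℕ, (x t) ^ k = x₀ ^ k * u ^ (p * k) := by
    intro k; rw [hx]; simpa [mul_comm] using pow_aux x₀ p k
  have hyt : ∀ k : ℕ, (y t) ^ k = y₀ ^ k * u ^ (q * k) := by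
    intro k; rw [hy]; simpa [mul_comm] using pow_aux y₀ q k
  -- the conserved quantity
  have hconst : (x t) ^ (a + 1) * (y t) ^ (b + 1) = x₀ ^ (a + 1) * y₀ ^ (b + 1) := by
    rw [hxt, hyt]
    have e0 : p * ((a + 1 : ℕ) : ℝ) + q * ((b + 1 : ℕ) : ℝ) = 0 := by
      rw [hp, hq, ← hM, ← hN]; field_simp; ring
    calc x₀ ^ (a + 1) * u ^ (p * ((a+1:ℕ):ℝ)) * (y₀ ^ (b + 1) * u ^ (q * ((b+1:ℕ):ℝ)))
        = x₀ ^ (a + 1) * y₀ ^ (b + 1) * u ^ (p * ((a+1:ℕ):ℝ) + q * ((b+1:ℕ):ℝ)) := by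
          rw [Real.rpow_add hu0]; ring
      _ = x₀ ^ (a + 1) * y₀ ^ (b + 1) := by rw [e0, Real.rpow_zero, mul_one]
  constructor
  · -- x equation
    have : D * ((b+1:ℕ):ℝ) * (x t) ^ (a + 1) * (y t) ^ b = x₀ * (-κ * p * u ^ (p - 1)) := by
      rw [hxt, hyt]
      have ecast : ((b : ℕ) : ℝ) = N - 1 := by rw [hNb]; push_cast; ring
      have eexp : p * ((a + 1 : ℕ) : ℝ) + q * ((b : ℕ) : ℝ) = p - 1 := by
        rw [hp, hq, ← hM, ecast]; field_simp; ring
      have hcoef : D * N * x₀ ^ (a + 1) * y₀ ^ b = x₀ * (-κ * p) := by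
        rw [hκ, hp]
        field_simp
        ring
      calc D * ((b+1:ℕ):ℝ) * (x₀ ^ (a + 1) * u ^ (p * ((a+1:ℕ):ℝ))) *
              (y₀ ^ b * u ^ (q * ((b:ℕ):ℝ)))
          = D * N * x₀ ^ (a + 1) * y₀ ^ b *
              u ^ (p * ((a+1:ℕ):ℝ) + q * ((b:ℕ):ℝ)) := by
            rw [Real.rpow_add hu0, ← hN]; ring
        _ = x₀ * (-κ * p) * u ^ (p - 1) := by rw [eexp, hcoef]
        _ = x₀ * (-κ * p * u ^ (p - 1)) := by ring
    rw [hconst, ← hD, this]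
    exact hxder
  · -- y equation
    have : -(D * ((a+1:ℕ):ℝ) * (x t) ^ a * (y t) ^ (b + 1)) = y₀ * (-κ * q * u ^ (q - 1)) := by
      rw [hxt, hyt]
      have ecast : ((a : ℕ) : ℝ) = M - 1 := by rw [hMa]; push_cast; ring
      have eexp : p * ((a : ℕ) : ℝ) + q * ((b + 1 : ℕ) : ℝ) = q - 1 := by
        rw [hp, hq, ← hN, ecast]; field_simp; ring
      have hcoef : -(D * M * x₀ ^ a * y₀ ^ (b + 1)) = y₀ * (-κ * q) := by
        rw [hκ, hq]
        field_simp
        ring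
      calc -(D * ((a+1:ℕ):ℝ) * (x₀ ^ a * u ^ (p * ((a:ℕ):ℝ))) *
              (y₀ ^ (b + 1) * u ^ (q * ((b+1:ℕ):ℝ))))
          = -(D * M * x₀ ^ a * y₀ ^ (b + 1)) *
              u ^ (p * ((a:ℕ):ℝ) + q * ((b+1:ℕ):ℝ)) := by
            rw [Real.rpow_add hu0, ← hM]; ring
        _ = y₀ * (-κ * q) * u ^ (q - 1) := by rw [eexp, hcoef]
        _ = y₀ * (-κ * q * u ^ (q - 1)) := by ring
    rw [hconst, ← hD, this]
    exact hyder
end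

section
/- Let m ≠ n, x₀, y₀ > 0, and set κ = h'(x₀^m y₀^n)(m−n)x₀^(m−1)y₀^(n−1). If κ > 0, then the solution pair (x(t), y(t)) = (x₀(1−κt)^(n/(n−m)), y₀(1−κt)^(m/(m−n))) of the Hamiltonian system blows up at time T* = 1/κ: namely, if n > m then x(t) → 0 and y(t) → ∞ as t → (1/κ)⁻, and if m > n then x(t) → ∞ and y(t) → 0 as t → (1/κ)⁻. -/
open Filter Real Set

private lemma base_tendsto {κ : ℝ} (hκpos : 0 < κ) :
    Tendsto (fun t : ℝ => 1 - κ * t) (nhdsWithin (1 / κ) (Set.Iio (1 / κ)))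
      (nhdsWithin 0 (Set.Ioi 0)) := by
  apply tendsto_nhdsWithin_of_tendsto_nhds_of_eventually_within
  · have h1 : Tendsto (fun t : ℝ => 1 - κ * t) (nhds (1 / κ)) (nhds (1 - κ * (1 / κ))) := by
      exact tendsto_const_nhds.sub ((continuous_const.mul continuous_id).tendsto _)
    rw [mul_one_div, div_self hκpos.ne', sub_self] at h1
    exact h1.mono_left nhdsWithin_le_nhds
  · filter_upwards [self_mem_nhdsWithin] with t ht
    have h2 : κ * t < 1 := by
      have := mul_lt_mul_of_pos_left ht hκpos
      rwa [mul_one_div, div_self hκpos.ne'] at this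
    simpa using h2

private lemma rpow_pos_tendsto {p : ℝ} (hp : 0 < p) :
    Tendsto (fun u : ℝ => u ^ p) (nhdsWithin 0 (Set.Ioi 0)) (nhds 0) := by
  have := (Real.continuousAt_rpow_const 0 p (Or.inr hp.le)).tendsto
  rw [Real.zero_rpow hp.ne'] at this
  exact this.mono_left nhdsWithin_le_nhds

private lemma rpow_neg_tendsto {p : ℝ} (hp : p < 0) :
    Tendsto (fun u : ℝ => u ^ p) (nhdsWithin 0 (Set.Ioi 0)) atTop := by
  have h1 : Tendsto (fun u : ℝ => (u⁻¹) ^ (-p)) (nhdsWithin 0 (Set.Ioi 0)) atTop :=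
    (tendsto_rpow_atTop (neg_pos.mpr hp)).comp tendsto_inv_nhdsGT_zero
  refine h1.congr' ?_
  filter_upwards [self_mem_nhdsWithin] with u (hu : 0 < u)
  rw [Real.rpow_neg (inv_nonneg.mpr hu.le), Real.inv_rpow hu.le, inv_inv]

theorem stmt_2 (m n : ℝ) (hm : 1 < m) (hn : 1 < n) (hmn : m ≠ n)
    (h : ℝ → ℝ) (hh : ContDiff ℝ 1 h)
    (x₀ y₀ : ℝ) (hx₀ : 0 < x₀) (hy₀ : 0 < y₀)
    (κ : ℝ)
    (hκ : κ = deriv h (x₀ ^ m * y₀ ^ n) * (m - n) * x₀ ^ (m - 1) * y₀ ^ (n - 1))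
    (hκpos : 0 < κ)
    (x y : ℝ → ℝ)
    (hx : x = fun t : ℝ => x₀ * (1 - κ * t) ^ (n / (n - m)))
    (hy : y = fun t : ℝ => y₀ * (1 - κ * t) ^ (m / (m - n))) :
    (m < n →
      Filter.Tendsto x (nhdsWithin (1 / κ) (Set.Iio (1 / κ))) (nhds 0) ∧
      Filter.Tendsto y (nhdsWithin (1 / κ) (Set.Iio (1 / κ))) Filter.atTop) ∧
    (n < m →
      Filter.Tendsto x (nhdsWithin (1 / κ) (Set.Iio (1 / κ))) Filter.atTop ∧
      Filter.Tendsto y (nhdsWithin (1 / κ) (Set.Iio (1 / κ))) (nhds 0)) := by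
  subst hx hy
  have hb := base_tendsto hκpos
  constructor
  · intro hlt
    constructor
    · have hp : 0 < n / (n - m) := div_pos (by linarith) (by linarith)
      have := ((rpow_pos_tendsto hp).comp hb).const_mul x₀
      simpa using this
    · have hp : m / (m - n) < 0 := div_neg_of_pos_of_neg (by linarith) (by linarith)
      exact ((rpow_neg_tendsto hp).comp hb).const_mul_atTop hy₀
  · intro hlt
    constructor
    · have hp : n / (n - m) < 0 := div_neg_of_pos_of_neg (by linarith) (by linarith)
      exact ((rpow_neg_tendsto hp).comp hb).const_mul_atTop hx₀
    · have hp : 0 < m / (m - n) := div_pos (by linarith) (by linarith)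
      have := ((rpow_pos_tendsto hp).comp hb).const_mul y₀
      simpa using this
end

section
/- Let q > 1 and b > 4. Then for every u ≥ 0, (1/b − 3/4)·u^q + (1/b + 1)·u ≤ 2·4^(1/(q−1)). -/
theorem stmt_4 (q b : ℝ) (hq : 1 < q) (hb : 4 < b) :
    ∀ u : ℝ, 0 ≤ u →
      (1 / b - 3 / 4) * u ^ q + (1 / b + 1) * u ≤ 2 * (4 : ℝ) ^ (1 / (q - 1)) := by
  intro u hu
  set M : ℝ := (4 : ℝ) ^ (1 / (q - 1)) with hMdef
  have hq1 : 0 < q - 1 := by linarith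
  have hM1 : (1 : ℝ) ≤ M := Real.one_le_rpow (by norm_num) (by positivity)
  have hMpow : M ^ (q - 1) = 4 := by
    rw [hMdef, ← Real.rpow_mul (by norm_num), one_div_mul_cancel (ne_of_gt hq1),
      Real.rpow_one]
  have hbpos : (0 : ℝ) < b := by linarith
  have hbinv : 1 / b < 1 / 4 := by
    apply one_div_lt_one_div_of_lt <;> linarith
  by_cases hcase : u ≤ M
  · have h1 : (1 / b - 3 / 4) * u ^ q ≤ 0 := by
      apply mul_nonpos_of_nonpos_of_nonneg
      · linarith
      · exact Real.rpow_nonneg hu q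
    have h2 : (1 / b + 1) * u ≤ (5 / 4) * M := by
      apply mul_le_mul (by linarith) hcase hu (by norm_num)
    linarith
  · push_neg at hcase
    have hMnn : (0 : ℝ) ≤ M := by linarith
    have h3 : (4 : ℝ) ≤ u ^ (q - 1) := by
      rw [← hMpow]
      exact Real.rpow_le_rpow hMnn hcase.le hq1.le
    have h4 : u ^ q = u ^ (q - 1) * u := by
      rw [← Real.rpow_add_one (by nlinarith) (q - 1)]
      ring_nf
    have h5 : 4 * u ≤ u ^ q := by
      rw [h4]
      exact mul_le_mul_of_nonneg_right h3 hu
    nlinarith [Real.rpow_nonneg hu q]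
end

section
/- Let m, n > 1, q > 1, b > 4, and k₂ = (4^(q/(q−1)) + 1)·n/ε_y² with ε_y > 0. Suppose y² ≤ n/(b k₂ (m+n)) and u ≥ 0. Then 2·[(k₂(m+n)y² − (3/4)n)u^q + (k₂(m+n)y² + n)u] ≤ 4n·4^(1/(q−1)), and consequently 2·n·2·4^(1/(q−1)) − ε_y²·k₂ = −n − (n/2)·0 implies: 4n·4^(1/(q−1)) − ε_y² k₂ ≤ −n. -/
theorem stmt_10 (m n q b εy k₂ : ℝ) (hm : 1 < m) (hn : 1 < n) (hq : 1 < q)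
    (hb : 4 < b) (hεy : 0 < εy)
    (hk₂ : k₂ = ((4 : ℝ) ^ (q / (q - 1)) + 1) * n / εy ^ 2)
    (y u : ℝ) (hy : y ^ 2 ≤ n / (b * k₂ * (m + n))) (hu : 0 ≤ u) :
    2 * ((k₂ * (m + n) * y ^ 2 - 3 / 4 * n) * u ^ q + (k₂ * (m + n) * y ^ 2 + n) * u)
        ≤ 4 * n * (4 : ℝ) ^ (1 / (q - 1)) ∧
    4 * n * (4 : ℝ) ^ (1 / (q - 1)) - εy ^ 2 * k₂ ≤ -n := by
  have hq1 : 0 < q - 1 := by linarith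
  have hn0 : (0:ℝ) < n := by linarith
  have hb0 : (0:ℝ) < b := by linarith
  set C := (4:ℝ) ^ (1 / (q - 1)) with hCdef
  have hCpos : 0 < C := Real.rpow_pos_of_pos (by norm_num) _
  have hC1 : (1:ℝ) ≤ C := Real.one_le_rpow (by norm_num) (by positivity)
  have hCq : C ^ (q - 1) = 4 := by
    rw [hCdef, ← Real.rpow_mul (by norm_num), one_div,
      inv_mul_cancel₀ (ne_of_gt hq1), Real.rpow_one]
  have h4C : (4:ℝ) ^ (q / (q - 1)) = 4 * C := by
    have hsplit : q / (q - 1) = 1 + 1 / (q - 1) := by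
      field_simp
      ring
    rw [hsplit, Real.rpow_add (by norm_num), Real.rpow_one, hCdef]
  have hk2pos : 0 < k₂ := by
    rw [hk₂]; positivity
  have hP : 0 < k₂ * (m + n) := mul_pos hk2pos (by linarith)
  have hA : k₂ * (m + n) * y ^ 2 ≤ n / b := by
    calc k₂ * (m + n) * y ^ 2 ≤ k₂ * (m + n) * (n / (b * k₂ * (m + n))) :=
          mul_le_mul_of_nonneg_left hy hP.le
      _ = n / b := by
          field_simp
  have hA4 : k₂ * (m + n) * y ^ 2 ≤ n / 4 := by
    have : n / b ≤ n / 4 := by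
      apply div_le_div_of_nonneg_left hn0.le (by norm_num) (by linarith)
    linarith
  have hub : 0 ≤ u ^ q := Real.rpow_nonneg hu q
  have key : 5 * u / 2 - u ^ q ≤ 4 * C := by
    by_cases hcase : u ≤ C
    · nlinarith
    · push_neg at hcase
      have hu0 : 0 < u := lt_trans hCpos hcase
      have h1 : C ^ (q - 1) ≤ u ^ (q - 1) :=
        Real.rpow_le_rpow hCpos.le hcase.le hq1.le
      rw [hCq] at h1
      have h2 : u ^ q = u ^ (q - 1) * u := by
        rw [← Real.rpow_add_one (ne_of_gt hu0)]
        ring_nf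
      nlinarith
  constructor
  · nlinarith [mul_le_mul_of_nonneg_right hA4 hub,
      mul_le_mul_of_nonneg_right hA4 hu,
      mul_le_mul_of_nonneg_left key hn0.le]
  · have hεk : εy ^ 2 * k₂ = (4 * C + 1) * n := by
      rw [hk₂, h4C]
      field_simp
    rw [hεk]
    nlinarith
end
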